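/- arXiv:1802.03493 — 2 statements merged into one kernel-verified Lean document; each statement's English description precedes it below -/
import Mathlib

section
/- Variance of the doubly robust estimator in contextual bandits with a known behavior policy: if π̂_b = π_b (so δ(x,a) = 0 everywhere), ω(x,a) = π_e(a|x)/π_b(a|x), and Δ(x,a) = Q̂(x,a;β) − Q(x,a), then n·V_{P^{π_b}}(ρ̂_DR) = E_{P^{π_b}}[ ω(x,a)² (r(x,a) − Q(x,a))² ] + V_{P0}[ V^{π_e}(x) ] + E_{P0,π_e}[ ω(x,a) Δ(x,a)² − ( E_{π_e}[Δ(x,a)] )² ], where V^{π_e}(x) = Σ_a π_e(a|x) Q(x,a). -/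
open Finset

/-- Expectation of `f` under the (finitely supported) distribution `p`. -/
noncomputable def pexp {Ω : Type*} [Fintype Ω] (p f : Ω → ℝ) : ℝ := ∑ ω, p ω * f ω

/-- Variance of `f` under the (finitely supported) distribution `p`. -/
noncomputable def pvar {Ω : Type*} [Fintype Ω] (p f : Ω → ℝ) : ℝ :=
  pexp p (fun ω => (f ω - pexp p f) ^ 2)

/-- Product distribution of `n` i.i.d. copies of `p`. -/
noncomputable def iidP {Ω : Type*} [Fintype Ω] (p : Ω → ℝ) (n : ℕ) (s : Fin n → Ω) : ℝ :=
  ∏ i, p (s i)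

lemma pexp_iid_prod {Ω : Type*} [Fintype Ω] (p : Ω → ℝ) (n : ℕ) (f : Fin n → Ω → ℝ) :
    pexp (iidP p n) (fun s => ∏ i, f i (s i)) = ∏ i, pexp p (f i) := by
  unfold pexp iidP
  rw [Fintype.prod_sum (fun i ω => p ω * f i ω)]
  exact Finset.sum_congr rfl fun s _ => (Finset.prod_mul_distrib).symm

lemma pvar_eq {Ω : Type*} [Fintype Ω] {p : Ω → ℝ} (hp : ∑ ω, p ω = 1) (f : Ω → ℝ) :
    pvar p f = pexp p (fun ω => f ω ^ 2) - (pexp p f) ^ 2 := by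
  simp only [pvar, pexp]
  have : ∀ ω, p ω * (f ω - ∑ ω, p ω * f ω) ^ 2
      = p ω * f ω ^ 2 - 2 * (∑ ω, p ω * f ω) * (p ω * f ω) + (∑ ω, p ω * f ω) ^ 2 * p ω := by
    intro ω; ring
  rw [Finset.sum_congr rfl fun ω _ => this ω]
  rw [Finset.sum_add_distrib, Finset.sum_sub_distrib, ← Finset.mul_sum, ← Finset.mul_sum, hp]
  ring

lemma prod_eq_mul_of_ne {ι M : Type*} [Fintype ι] [DecidableEq ι] [CommMonoid M]
    (F : ι → M) (i j : ι) (hij : i ≠ j) (hF : ∀ k, k ≠ i → k ≠ j → F k = 1) :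
    ∏ k, F k = F i * F j := by
  rw [← Finset.mul_prod_erase univ F (mem_univ i),
    ← Finset.mul_prod_erase _ F (Finset.mem_erase.2 ⟨hij.symm, mem_univ j⟩),
    Finset.prod_eq_one, mul_one]
  intro k hk
  simp only [Finset.mem_erase] at hk
  exact hF k hk.2.1 hk.1

lemma iid_single {Ω : Type*} [Fintype Ω] {p : Ω → ℝ} (hp : ∑ ω, p ω = 1) {n : ℕ}
    (i : Fin n) (g : Ω → ℝ) :
    pexp (iidP p n) (fun s => g (s i)) = pexp p g := by
  have h := pexp_iid_prod p n (fun j => if j = i then g else fun _ => 1)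
  have h1 : (fun s : Fin n → Ω => ∏ j, (if j = i then g else fun _ => 1) (s j))
      = fun s => g (s i) := by
    funext s
    rw [Finset.prod_eq_single i]
    · simp
    · intro k _ hk; simp [hk]
    · simp
  have h2 : ∀ j : Fin n, pexp p (if j = i then g else fun _ => 1)
      = if j = i then pexp p g else 1 := by
    intro j
    by_cases hj : j = i <;> simp [hj, pexp, hp]
  rw [h1] at h
  rw [h, Finset.prod_congr rfl fun j _ => h2 j, Finset.prod_ite_eq' univ i (fun _ => pexp p g)]
  simp

lemma iid_two {Ω : Type*} [Fintype Ω] {p : Ω → ℝ} (hp : ∑ ω, p ω = 1) {n : ℕ}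
    {i j : Fin n} (hij : i ≠ j) (g h : Ω → ℝ) :
    pexp (iidP p n) (fun s => g (s i) * h (s j)) = pexp p g * pexp p h := by
  set f : Fin n → Ω → ℝ := fun k ω => (if k = i then g ω else 1) * (if k = j then h ω else 1)
    with hf
  have hprod := pexp_iid_prod p n f
  have h1 : (fun s : Fin n → Ω => ∏ k, f k (s k)) = fun s => g (s i) * h (s j) := by
    funext s
    rw [prod_eq_mul_of_ne (fun k => f k (s k)) i j hij]
    · simp [hf, hij, hij.symm]
    · intro k hk1 hk2; simp [hf, hk1, hk2]
  have h2 : ∏ k, pexp p (f k) = pexp p g * pexp p h := by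
    rw [prod_eq_mul_of_ne (fun k => pexp p (f k)) i j hij]
    · congr 1
      · simp only [hf]; unfold pexp
        refine Finset.sum_congr rfl fun ω _ => ?_
        simp [hij]
      · simp only [hf]; unfold pexp
        refine Finset.sum_congr rfl fun ω _ => ?_
        simp [hij.symm]
    · intro k hk1 hk2
      simp only [hf]
      unfold pexp
      simp [hk1, hk2, hp]
  rw [h1] at hprod
  rw [hprod, h2]

lemma pexp_sum_fn {Ω ι : Type*} [Fintype Ω] [Fintype ι] (p : Ω → ℝ) (F : ι → Ω → ℝ) :
    pexp p (fun ω => ∑ i, F i ω) = ∑ i, pexp p (F i) := by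
  simp only [pexp, Finset.mul_sum]
  rw [Finset.sum_comm]

lemma iidP_sum_one {Ω : Type*} [Fintype Ω] {p : Ω → ℝ} (hp : ∑ ω, p ω = 1) (n : ℕ) :
    ∑ s : Fin n → Ω, iidP p n s = 1 := by
  have h := pexp_iid_prod p n (fun _ _ => 1)
  simp only [Finset.prod_const_one] at h
  simpa [pexp, hp] using h

lemma key_var {Ω : Type*} [Fintype Ω] {p : Ω → ℝ} (hp : ∑ ω, p ω = 1) {n : ℕ} (hn : 0 < n)
    (g : Ω → ℝ) :
    (n : ℝ) * pvar (iidP p n) (fun s => (1 / (n : ℝ)) * ∑ i, g (s i)) = pvar p g := by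
  have hn' : (n : ℝ) ≠ 0 := Nat.cast_ne_zero.2 hn.ne'
  have hiid := iidP_sum_one hp n
  rw [pvar_eq hiid, pvar_eq hp]
  have hmean : pexp (iidP p n) (fun s => (1 / (n : ℝ)) * ∑ i, g (s i)) = pexp p g := by
    have : (fun s : Fin n → Ω => (1 / (n : ℝ)) * ∑ i, g (s i))
        = fun s => ∑ i : Fin n, (1 / (n : ℝ)) * g (s i) := by
      funext s; rw [Finset.mul_sum]
    rw [this, pexp_sum_fn]
    have : ∀ i : Fin n, pexp (iidP p n) (fun s => (1 / (n : ℝ)) * g (s i))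
        = (1 / (n : ℝ)) * pexp p g := by
      intro i
      unfold pexp
      rw [show ∀ F : (Fin n → Ω) → ℝ, (∑ s : Fin n → Ω, iidP p n s * ((1/(n:ℝ)) * F s))
          = (1/(n:ℝ)) * ∑ s, iidP p n s * F s from fun F => by
            rw [Finset.mul_sum]; exact Finset.sum_congr rfl fun s _ => by ring]
      rw [show (∑ s : Fin n → Ω, iidP p n s * g (s i)) = pexp p g from iid_single hp i g]
      rfl
    rw [Finset.sum_congr rfl fun i _ => this i, Finset.sum_const, card_univ, Fintype.card_fin,
      nsmul_eq_mul]
    field_simp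
  rw [hmean]
  have hsq : pexp (iidP p n) (fun s => ((1 / (n : ℝ)) * ∑ i, g (s i)) ^ 2)
      = (1 / (n : ℝ)^2) * ((n : ℝ) * pexp p (fun ω => g ω ^ 2)
        + ((n : ℝ)^2 - (n : ℝ)) * (pexp p g)^2) := by
    have e1 : (fun s : Fin n → Ω => ((1 / (n : ℝ)) * ∑ i, g (s i)) ^ 2)
        = fun s => ∑ i : Fin n, (1 / (n:ℝ)^2) * ∑ j : Fin n, g (s i) * g (s j) := by
      funext s
      rw [← Finset.mul_sum, ← Finset.sum_mul_sum]
      ring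
    rw [e1, pexp_sum_fn]
    have e2 : ∀ i : Fin n, pexp (iidP p n) (fun s => (1 / (n:ℝ)^2) * ∑ j : Fin n, g (s i) * g (s j))
        = (1 / (n:ℝ)^2) * (pexp p (fun ω => g ω ^2) + ((n:ℝ) - 1) * (pexp p g)^2) := by
      intro i
      have : (fun s : Fin n → Ω => (1 / (n:ℝ)^2) * ∑ j : Fin n, g (s i) * g (s j))
          = fun s => ∑ j : Fin n, (1 / (n:ℝ)^2) * (g (s i) * g (s j)) := by
        funext s; rw [Finset.mul_sum]
      rw [this, pexp_sum_fn]
      have e3 : ∀ j : Fin n, pexp (iidP p n) (fun s => (1 / (n:ℝ)^2) * (g (s i) * g (s j)))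
          = (1 / (n:ℝ)^2) * (if j = i then pexp p (fun ω => g ω ^2) else (pexp p g)^2) := by
        intro j
        have hpull : pexp (iidP p n) (fun s => (1 / (n:ℝ)^2) * (g (s i) * g (s j)))
            = (1 / (n:ℝ)^2) * pexp (iidP p n) (fun s => g (s i) * g (s j)) := by
          unfold pexp
          rw [Finset.mul_sum]
          exact Finset.sum_congr rfl fun s _ => by ring
        rw [hpull]
        by_cases hj : j = i
        · subst hj
          have : (fun s : Fin n → Ω => g (s j) * g (s j)) = fun s => (fun ω => g ω ^2) (s j) := by
            funext s; ring
          rw [this, iid_single hp j (fun ω => g ω ^ 2)]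
          simp
        · rw [iid_two hp (fun h => hj h.symm) g g]
          rw [if_neg hj]
          ring
      rw [Finset.sum_congr rfl fun j _ => e3 j]
      rw [show ∀ c d : ℝ, (∑ j : Fin n, (1 / (n:ℝ)^2) * (if j = i then c else d))
          = (1 / (n:ℝ)^2) * (c + ((n:ℝ) - 1) * d) from ?_]
      · intro c d
        rw [← Finset.mul_sum]
        congr 1
        have : ∀ j : Fin n, (if j = i then c else d) = d + (if j = i then c - d else 0) := by
          intro j; by_cases hj : j = i <;> simp [hj]
        rw [Finset.sum_congr rfl fun j _ => this j, Finset.sum_add_distrib, Finset.sum_const,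
          Finset.sum_ite_eq' univ i (fun _ => c - d)]
        simp [card_univ]
        ring
    rw [Finset.sum_congr rfl fun i _ => e2 i, Finset.sum_const, card_univ, Fintype.card_fin,
      nsmul_eq_mul]
    ring
  rw [hsq]
  field_simp
  ring
/-- Variance of the doubly robust estimator in contextual bandits with a
known behavior policy (so `π̂_b = π_b` and `δ ≡ 0`). -/
theorem dr_bandit_variance_known_behavior
    {X A R : Type*} [Fintype X] [Fintype A] [Fintype R]
    (P0 : X → ℝ) (πb πe : X → A → ℝ) (Prw : X → A → R → ℝ) (rv : R → ℝ)
    (Rmax : ℝ) (Qh : X → A → ℝ) (n : ℕ) (hn : 0 < n)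
    (hP0 : ∀ x, 0 ≤ P0 x) (hP0sum : ∑ x, P0 x = 1)
    (hπb : ∀ x a, 0 < πb x a) (hπbsum : ∀ x, ∑ a, πb x a = 1)
    (hπe : ∀ x a, 0 ≤ πe x a) (hπesum : ∀ x, ∑ a, πe x a = 1)
    (hPrw : ∀ x a o, 0 ≤ Prw x a o) (hPrwsum : ∀ x a, ∑ o, Prw x a o = 1)
    (hRmax : 0 ≤ Rmax) (hrv : ∀ o, 0 ≤ rv o ∧ rv o ≤ Rmax) :
    -- mean reward
    let Q : X → A → ℝ := fun x a => ∑ o, Prw x a o * rv o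
    -- true value function of the evaluation policy
    let Vpe : X → ℝ := fun x => ∑ a, πe x a * Q x a
    -- model value function
    let Vh : X → ℝ := fun x => ∑ a, πe x a * Qh x a
    -- sampling distribution of one data point (x, a, r) under the behavior policy
    let p : X × A × R → ℝ := fun s => P0 s.1 * πb s.1 s.2.1 * Prw s.1 s.2.1 s.2.2
    -- single-sample doubly robust term (behavior policy known)
    let g : X × A × R → ℝ :=
      fun s => πe s.1 s.2.1 / πb s.1 s.2.1 * (rv s.2.2 - Qh s.1 s.2.1) + Vh s.1
    -- importance weight and model bias
    let ω : X → A → ℝ := fun x a => πe x a / πb x a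
    let Δ : X → A → ℝ := fun x a => Qh x a - Q x a
    (n : ℝ) * pvar (iidP p n) (fun s => (1 / (n : ℝ)) * ∑ i, g (s i)) =
      pexp p (fun s => (ω s.1 s.2.1) ^ 2 * (rv s.2.2 - Q s.1 s.2.1) ^ 2)
      + pvar P0 Vpe
      + ∑ x, P0 x * ∑ a, πe x a *
          (ω x a * (Δ x a) ^ 2 - (∑ a', πe x a' * Δ x a') ^ 2) := by
  intro Q Vpe Vh p g ω Δ
  -- normalization of p
  have hω : ∀ x a, πb x a * ω x a = πe x a := by
    intro x a
    simp only [ω]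
    rw [mul_comm, div_mul_cancel₀ _ (hπb x a).ne']
  have hfact : ∀ F : X → A → R → ℝ,
      (∑ s : X × A × R, p s * F s.1 s.2.1 s.2.2)
        = ∑ x, P0 x * ∑ a, πb x a * ∑ o, Prw x a o * F x a o := by
    intro F
    rw [Fintype.sum_prod_type]
    refine Finset.sum_congr rfl fun x _ => ?_
    rw [Fintype.sum_prod_type, Finset.mul_sum]
    refine Finset.sum_congr rfl fun a _ => ?_
    rw [Finset.mul_sum, Finset.mul_sum]
    refine Finset.sum_congr rfl fun o _ => ?_
    simp only [p]
    ring
  have hpsum : ∑ s : X × A × R, p s = 1 := by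
    have := hfact (fun _ _ _ => 1)
    simp only [mul_one] at this
    rw [this]
    rw [Finset.sum_congr rfl fun x _ => by rw [Finset.sum_congr rfl fun a _ => by
        rw [hPrwsum x a, mul_one], hπbsum x, mul_one]]
    exact hP0sum
  -- mean of g
  have hEg : pexp p g = pexp P0 Vpe := by
    show (∑ s : X × A × R, p s * g s) = _
    have : (∑ s : X × A × R, p s * g s)
        = ∑ s : X × A × R, p s * (πe s.1 s.2.1 / πb s.1 s.2.1 * (rv s.2.2 - Qh s.1 s.2.1) + Vh s.1) := rfl
    rw [this, hfact (fun x a o => πe x a / πb x a * (rv o - Qh x a) + Vh x)]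
    have h1 : ∀ x a, ∑ o, Prw x a o * (πe x a / πb x a * (rv o - Qh x a) + Vh x)
        = πe x a / πb x a * (Q x a - Qh x a) + Vh x := by
      intro x a
      have e1 : ∀ o, Prw x a o * (πe x a / πb x a * (rv o - Qh x a) + Vh x)
          = πe x a / πb x a * (Prw x a o * rv o)
            + (Vh x - πe x a / πb x a * Qh x a) * Prw x a o := by intro o; ring
      rw [Finset.sum_congr rfl fun o _ => e1 o, Finset.sum_add_distrib, ← Finset.mul_sum,
        ← Finset.mul_sum, hPrwsum, mul_one]
      simp only [Q]
      ring
    have h2 : ∀ x, ∑ a, πb x a * (πe x a / πb x a * (Q x a - Qh x a) + Vh x) = Vpe x := by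
      intro x
      have e : ∀ a, πb x a * (πe x a / πb x a * (Q x a - Qh x a) + Vh x)
          = (πe x a * Q x a - πe x a * Qh x a) + Vh x * πb x a := by
        intro a
        have hb := (hπb x a).ne'
        field_simp
      rw [Finset.sum_congr rfl fun a _ => e a, Finset.sum_add_distrib, Finset.sum_sub_distrib,
        ← Finset.mul_sum, hπbsum, mul_one]
      simp only [Vpe, Vh]
      ring
    rw [Finset.sum_congr rfl fun x _ => by rw [Finset.sum_congr rfl fun a _ => by
        rw [h1 x a], h2 x]]
    rfl
  -- ∑ πe Δ = Vh - Vpe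
  have hEΔ : ∀ x, ∑ a, πe x a * Δ x a = Vh x - Vpe x := by
    intro x
    simp only [Δ, Vpe, Vh, mul_sub]
    rw [Finset.sum_sub_distrib]
  -- second moment of g
  have hzero : ∀ x a, ∑ o, Prw x a o * (rv o - Q x a) = 0 := by
    intro x a
    have e : ∀ o, Prw x a o * (rv o - Q x a) = Prw x a o * rv o - Q x a * Prw x a o := by
      intro o; ring
    rw [Finset.sum_congr rfl fun o _ => e o, Finset.sum_sub_distrib, ← Finset.mul_sum,
      hPrwsum, mul_one]
    simp only [Q]
    ring
  have hEg2 : pexp p (fun s => g s ^ 2)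
      = pexp p (fun s => (ω s.1 s.2.1) ^ 2 * (rv s.2.2 - Q s.1 s.2.1) ^ 2)
        + ∑ x, P0 x * (2 * Vh x * Vpe x - Vh x ^ 2 + ∑ a, πe x a * ω x a * Δ x a ^ 2) := by
    show (∑ s : X × A × R, p s * g s ^ 2) = (∑ s : X × A × R, p s * _) + _
    rw [hfact (fun x a o => (πe x a / πb x a * (rv o - Qh x a) + Vh x) ^ 2),
      hfact (fun x a o => (ω x a) ^ 2 * (rv o - Q x a) ^ 2)]
    have hin : ∀ x a, ∑ o, Prw x a o * (πe x a / πb x a * (rv o - Qh x a) + Vh x) ^ 2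
        = (∑ o, Prw x a o * ((ω x a) ^ 2 * (rv o - Q x a) ^ 2)) + (Vh x - ω x a * Δ x a) ^ 2 := by
      intro x a
      have e : ∀ o, Prw x a o * (πe x a / πb x a * (rv o - Qh x a) + Vh x) ^ 2
          = Prw x a o * ((ω x a) ^ 2 * (rv o - Q x a) ^ 2)
            + (2 * ω x a * (Vh x - ω x a * Δ x a)) * (Prw x a o * (rv o - Q x a))
            + (Vh x - ω x a * Δ x a) ^ 2 * Prw x a o := by
        intro o
        simp only [ω, Δ]
        ring
      rw [Finset.sum_congr rfl fun o _ => e o, Finset.sum_add_distrib, Finset.sum_add_distrib,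
        ← Finset.mul_sum, ← Finset.mul_sum, hzero, hPrwsum, mul_zero, add_zero, mul_one]
    have hc : ∀ x, ∑ a, πb x a * (Vh x - ω x a * Δ x a) ^ 2
        = 2 * Vh x * Vpe x - Vh x ^ 2 + ∑ a, πe x a * ω x a * Δ x a ^ 2 := by
      intro x
      have e : ∀ a, πb x a * (Vh x - ω x a * Δ x a) ^ 2
          = Vh x ^ 2 * πb x a - 2 * Vh x * Δ x a * (πb x a * ω x a)
            + (πb x a * ω x a) * ω x a * Δ x a ^ 2 := by intro a; ring
      have e' : ∀ a, πb x a * (Vh x - ω x a * Δ x a) ^ 2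
          = Vh x ^ 2 * πb x a - 2 * Vh x * (πe x a * Δ x a)
            + πe x a * ω x a * Δ x a ^ 2 := by
        intro a; rw [e a, hω x a]; ring
      rw [Finset.sum_congr rfl fun a _ => e' a, Finset.sum_add_distrib, Finset.sum_sub_distrib,
        ← Finset.mul_sum, ← Finset.mul_sum, hπbsum, hEΔ, mul_one]
      ring
    have hsplit : ∀ x, ∑ a, πb x a * ((∑ o, Prw x a o * ((ω x a) ^ 2 * (rv o - Q x a) ^ 2))
          + (Vh x - ω x a * Δ x a) ^ 2)
        = (∑ a, πb x a * ∑ o, Prw x a o * ((ω x a) ^ 2 * (rv o - Q x a) ^ 2))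
          + (2 * Vh x * Vpe x - Vh x ^ 2 + ∑ a, πe x a * ω x a * Δ x a ^ 2) := by
      intro x
      rw [Finset.sum_congr rfl fun a _ => mul_add (πb x a) _ _, Finset.sum_add_distrib, hc x]
    rw [Finset.sum_congr rfl fun x _ => by rw [Finset.sum_congr rfl fun a _ => by
        rw [hin x a], hsplit x]]
    rw [Finset.sum_congr rfl fun x _ => mul_add (P0 x) _ _, Finset.sum_add_distrib]
  -- reduce iid variance
  rw [key_var hpsum hn g, pvar_eq hpsum g, pvar_eq hP0sum Vpe, hEg, hEg2]
  -- third term simplification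
  have hthird : ∀ x, ∑ a, πe x a * (ω x a * Δ x a ^ 2 - (∑ a', πe x a' * Δ x a') ^ 2)
      = (∑ a, πe x a * ω x a * Δ x a ^ 2) - (Vh x - Vpe x) ^ 2 := by
    intro x
    have e : ∀ a, πe x a * (ω x a * Δ x a ^ 2 - (∑ a', πe x a' * Δ x a') ^ 2)
        = πe x a * ω x a * Δ x a ^ 2 - (∑ a', πe x a' * Δ x a') ^ 2 * πe x a := by
      intro a; ring
    rw [Finset.sum_congr rfl fun a _ => e a, Finset.sum_sub_distrib, ← Finset.mul_sum,
      hπesum, mul_one, hEΔ]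
  simp only [hthird]
  -- final algebra
  have hVpe2 : pexp P0 (fun x => Vpe x ^ 2) = ∑ x, P0 x * Vpe x ^ 2 := rfl
  have hmerge : ∑ x, P0 x * (2 * Vh x * Vpe x - Vh x ^ 2 + ∑ a, πe x a * ω x a * Δ x a ^ 2)
      = (∑ x, P0 x * Vpe x ^ 2)
        + ∑ x, P0 x * ((∑ a, πe x a * ω x a * Δ x a ^ 2) - (Vh x - Vpe x) ^ 2) := by
    rw [← Finset.sum_add_distrib]
    refine Finset.sum_congr rfl fun x _ => ?_
    ring
  rw [hmerge, hVpe2]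
  ring
end

section
/- First alternative variance formula (Theorem 1(i)): with known behavior policy π_b and ω(x,a) = π_e(a|x)/π_b(a|x), the variance of the doubly robust estimator satisfies n·V_{P^{π_b}}(ρ̂_DR) = E_{P^{π_b}}[ ω(x,a) ( E_{π_e}[ ω(x,a') Q̂(x,a';β)² ] − V̂^{π_e}(x;β)² − 2 r(x,a) ( ω(x,a) Q̂(x,a;β) − V̂^{π_e}(x;β) ) ) + ω(x,a)² r(x,a)² − ( E_{π_e}[r(x,a)] )² ] + V_{P0}( E_{π_e}[r(x,a)] ), where inside the expectation a' ∼ π_e(·|x) independently. In particular, this expression contains no occurrence of the unknown mean reward Q or model bias Δ. -/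
open Finset

lemma sum_fn_prod {n : ℕ} {Ω : Type*} [Fintype Ω] (h : Fin n → Ω → ℝ) :
    ∑ s : Fin n → Ω, ∏ i, h i (s i) = ∏ i, ∑ ω, h i ω := by
  rw [Finset.prod_univ_sum, Fintype.piFinset_univ]

lemma pexp_sum {Ω ι : Type*} [Fintype Ω] (p : Ω → ℝ) (t : Finset ι) (F : ι → Ω → ℝ) :
    pexp p (fun s => ∑ i ∈ t, F i s) = ∑ i ∈ t, pexp p (F i) := by
  unfold pexp
  simp_rw [Finset.mul_sum]
  exact Finset.sum_comm

lemma pexp_congr {Ω : Type*} [Fintype Ω] (p f g : Ω → ℝ) (h : ∀ ω, f ω = g ω) :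
    pexp p f = pexp p g := by
  unfold pexp; exact Finset.sum_congr rfl fun ω _ => by rw [h]

lemma pexp_const_mul {Ω : Type*} [Fintype Ω] (p f : Ω → ℝ) (c : ℝ) :
    pexp p (fun s => c * f s) = c * pexp p f := by
  unfold pexp
  rw [Finset.mul_sum]
  exact Finset.sum_congr rfl fun ω _ => by ring

lemma pexp_sub {Ω : Type*} [Fintype Ω] (p f g : Ω → ℝ) :
    pexp p (fun s => f s - g s) = pexp p f - pexp p g := by
  unfold pexp
  rw [← Finset.sum_sub_distrib]
  exact Finset.sum_congr rfl fun ω _ => by ring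

lemma pexp_add {Ω : Type*} [Fintype Ω] (p f g : Ω → ℝ) :
    pexp p (fun s => f s + g s) = pexp p f + pexp p g := by
  unfold pexp
  rw [← Finset.sum_add_distrib]
  exact Finset.sum_congr rfl fun ω _ => by ring

lemma pexp_const {Ω : Type*} [Fintype Ω] (p : Ω → ℝ) (hp : ∑ ω, p ω = 1) (c : ℝ) :
    pexp p (fun _ => c) = c := by
  unfold pexp
  rw [show (∑ ω, p ω * c) = (∑ ω, p ω) * c from (Finset.sum_mul Finset.univ p c).symm, hp, one_mul]

lemma pvar_const_mul {Ω : Type*} [Fintype Ω] (p f : Ω → ℝ) (c : ℝ) :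
    pvar p (fun s => c * f s) = c ^ 2 * pvar p f := by
  unfold pvar
  rw [pexp_const_mul]
  have h2 : pexp p (fun ω => (c * f ω - c * pexp p f) ^ 2)
      = pexp p (fun ω => c ^ 2 * ((f ω - pexp p f) ^ 2)) :=
    pexp_congr _ _ _ fun ω => by ring
  rw [h2, pexp_const_mul]

lemma pvar_eq_sub {Ω : Type*} [Fintype Ω] (p f : Ω → ℝ) (hp : ∑ ω, p ω = 1) :
    pvar p f = pexp p (fun s => f s ^ 2) - (pexp p f) ^ 2 := by
  unfold pvar
  have : pexp p (fun ω => (f ω - pexp p f) ^ 2)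
      = pexp p (fun ω => f ω ^ 2 - (2 * pexp p f) * f ω + (pexp p f) ^ 2) :=
    pexp_congr _ _ _ fun ω => by ring
  rw [this, pexp_add, pexp_sub, pexp_const_mul, pexp_const p hp]
  ring

lemma pexp_iid_coord {n : ℕ} {Ω : Type*} [Fintype Ω] (p : Ω → ℝ) (hp : ∑ ω, p ω = 1)
    (h : Ω → ℝ) (i : Fin n) :
    pexp (iidP p n) (fun s => h (s i)) = pexp p h := by
  unfold pexp iidP
  have : ∀ s : Fin n → Ω, (∏ j, p (s j)) * h (s i)
      = ∏ j, (p (s j) * if j = i then h (s j) else 1) := by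
    intro s
    rw [Finset.prod_mul_distrib, Finset.prod_ite_eq' univ i (fun j => h (s j))]
    simp
  simp_rw [this]
  rw [sum_fn_prod (fun j ω => p ω * if j = i then h ω else 1)]
  have : ∀ j : Fin n, (∑ ω, (p ω * if j = i then h ω else 1))
      = if j = i then pexp p h else 1 := by
    intro j
    by_cases hj : j = i <;> simp [hj, pexp, hp]
  simp_rw [this]
  rw [Finset.prod_ite_eq' univ i (fun _ => pexp p h)]
  simp [pexp]

lemma pexp_iid_pair {n : ℕ} {Ω : Type*} [Fintype Ω] (p : Ω → ℝ) (hp : ∑ ω, p ω = 1)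
    (h k : Ω → ℝ) (i j : Fin n) (hij : i ≠ j) :
    pexp (iidP p n) (fun s => h (s i) * k (s j)) = pexp p h * pexp p k := by
  unfold pexp iidP
  have : ∀ s : Fin n → Ω, (∏ m, p (s m)) * (h (s i) * k (s j))
      = ∏ m, (p (s m) * (if m = i then h (s m) else 1) * (if m = j then k (s m) else 1)) := by
    intro s
    simp_rw [Finset.prod_mul_distrib]
    rw [Finset.prod_ite_eq' univ i (fun m => h (s m)), Finset.prod_ite_eq' univ j (fun m => k (s m))]
    simp; ring
  simp_rw [this]
  rw [sum_fn_prod (fun m ω => p ω * (if m = i then h ω else 1) * (if m = j then k ω else 1))]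
  have : ∀ m : Fin n, (∑ ω, p ω * (if m = i then h ω else 1) * (if m = j then k ω else 1))
      = (if m = i then ∑ ω, p ω * h ω else if m = j then ∑ ω, p ω * k ω else 1) := by
    intro m
    by_cases h1 : m = i
    · subst h1; simp [hij, mul_comm]
    · by_cases h2 : m = j <;> simp [h1, h2, hp, Ne.symm hij]
  simp_rw [this]
  have hsplit : ∀ m : Fin n,
      (if m = i then ∑ ω, p ω * h ω else if m = j then ∑ ω, p ω * k ω else 1)
      = (if m = i then ∑ ω, p ω * h ω else 1) * (if m = j then ∑ ω, p ω * k ω else 1) := by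
    intro m
    by_cases h1 : m = i
    · subst h1; simp [hij, Ne.symm hij]
    · by_cases h2 : m = j <;> simp [h1, h2, Ne.symm hij]
  simp_rw [hsplit]
  rw [Finset.prod_mul_distrib, Finset.prod_ite_eq' univ i (fun _ => ∑ ω, p ω * h ω),
    Finset.prod_ite_eq' univ j (fun _ => ∑ ω, p ω * k ω)]
  simp [pexp]

lemma pvar_iid {n : ℕ} {Ω : Type*} [Fintype Ω] (p : Ω → ℝ) (hp : ∑ ω, p ω = 1)
    (g : Ω → ℝ) :
    pvar (iidP p n) (fun s => ∑ i, g (s i)) = n * pvar p g := by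
  have hiid1 : ∑ s : Fin n → Ω, iidP p n s = 1 := by
    unfold iidP; rw [sum_fn_prod (fun _ ω => p ω)]; simp [hp]
  have hES : pexp (iidP p n) (fun s => ∑ i, g (s i)) = n * pexp p g := by
    rw [pexp_sum (iidP p n) univ (fun i s => g (s i))]
    have : ∀ i : Fin n, pexp (iidP p n) (fun s => g (s i)) = pexp p g :=
      fun i => pexp_iid_coord p hp g i
    simp_rw [this]
    simp [Finset.sum_const, Finset.card_univ, nsmul_eq_mul]
  have hpair : ∀ i j : Fin n, pexp (iidP p n) (fun s => g (s i) * g (s j))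
      = if i = j then pexp p (fun ω => g ω * g ω) else pexp p g * pexp p g := by
    intro i j
    by_cases hij : i = j
    · subst hij; rw [if_pos rfl]
      exact pexp_iid_coord p hp (fun ω => g ω * g ω) i
    · rw [if_neg hij]; exact pexp_iid_pair p hp g g i j hij
  have hES2 : pexp (iidP p n) (fun s => (∑ i, g (s i)) ^ 2)
      = n * pexp p (fun ω => g ω ^ 2) + ((n:ℝ)^2 - n) * (pexp p g)^2 := by
    have h1 : ∀ s : Fin n → Ω, (∑ i, g (s i)) ^ 2 = ∑ i, ∑ j, g (s i) * g (s j) := by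
      intro s; rw [sq, Finset.sum_mul_sum]
    rw [pexp_congr (iidP p n) _ _ h1]
    rw [pexp_sum (iidP p n) univ (fun i s => ∑ j, g (s i) * g (s j))]
    have h2 : ∀ i : Fin n, pexp (iidP p n) (fun s => ∑ j, g (s i) * g (s j))
        = ∑ j, pexp (iidP p n) (fun s => g (s i) * g (s j)) := fun i =>
      pexp_sum (iidP p n) univ (fun j s => g (s i) * g (s j))
    simp_rw [h2, hpair]
    set Av := pexp p (fun ω => g ω * g ω) with hA
    set B := pexp p g * pexp p g with hB
    have hrow : ∀ i : Fin n, (∑ j, if i = j then Av else B) = (Av - B) + n * B := by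
      intro i
      have h3 : ∀ j : Fin n, (if i = j then Av else B) = (if i = j then Av - B else 0) + B := by
        intro j; by_cases h : i = j <;> simp [h]
      simp_rw [h3]
      rw [Finset.sum_add_distrib, Finset.sum_ite_eq univ i (fun _ => Av - B)]
      simp [Finset.card_univ, nsmul_eq_mul]
    simp_rw [hrow]
    rw [Finset.sum_const, Finset.card_univ]
    have hAv : Av = pexp p (fun ω => g ω ^ 2) := pexp_congr _ _ _ fun ω => (sq (g ω)).symm
    simp only [Fintype.card_fin, nsmul_eq_mul, hAv, hB]
    ring
  rw [pvar_eq_sub _ _ hiid1, pvar_eq_sub p g hp, hES, hES2]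
  ring

/-- First alternative variance formula (Theorem 1(i)) for the doubly robust
estimator in contextual bandits with a known behavior policy; the right-hand side contains
no occurrence of the unknown mean reward `Q` or model bias `Δ` other than through the
conditional mean reward of the evaluation policy `E_{π_e}[r(x,a)]`. -/
theorem dr_bandit_variance_form_one
    {X A R : Type*} [Fintype X] [Fintype A] [Fintype R]
    (P0 : X → ℝ) (πb πe : X → A → ℝ) (Prw : X → A → R → ℝ) (rv : R → ℝ)
    (Rmax : ℝ) (Qh : X → A → ℝ) (n : ℕ) (hn : 0 < n)
    (hP0 : ∀ x, 0 ≤ P0 x) (hP0sum : ∑ x, P0 x = 1)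
    (hπb : ∀ x a, 0 < πb x a) (hπbsum : ∀ x, ∑ a, πb x a = 1)
    (hπe : ∀ x a, 0 ≤ πe x a) (hπesum : ∀ x, ∑ a, πe x a = 1)
    (hPrw : ∀ x a o, 0 ≤ Prw x a o) (hPrwsum : ∀ x a, ∑ o, Prw x a o = 1)
    (hRmax : 0 ≤ Rmax) (hrv : ∀ o, 0 ≤ rv o ∧ rv o ≤ Rmax) :
    -- mean reward and the conditional mean reward of the evaluation policy E_{π_e}[r(x,·)]
    let Q : X → A → ℝ := fun x a => ∑ o, Prw x a o * rv o
    let rπe : X → ℝ := fun x => ∑ a, πe x a * Q x a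
    -- model value function
    let Vh : X → ℝ := fun x => ∑ a, πe x a * Qh x a
    -- sampling distribution of one data point (x, a, r) under the behavior policy
    let p : X × A × R → ℝ := fun s => P0 s.1 * πb s.1 s.2.1 * Prw s.1 s.2.1 s.2.2
    -- importance weight
    let ω : X → A → ℝ := fun x a => πe x a / πb x a
    -- single-sample doubly robust term
    let g : X × A × R → ℝ :=
      fun s => ω s.1 s.2.1 * (rv s.2.2 - Qh s.1 s.2.1) + Vh s.1
    (n : ℝ) * pvar (iidP p n) (fun s => (1 / (n : ℝ)) * ∑ i, g (s i)) =
      pexp p (fun s =>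
        ω s.1 s.2.1 *
          ((∑ a', πe s.1 a' * (ω s.1 a' * (Qh s.1 a') ^ 2))
            - (Vh s.1) ^ 2
            - 2 * rv s.2.2 * (ω s.1 s.2.1 * Qh s.1 s.2.1 - Vh s.1))
        + (ω s.1 s.2.1) ^ 2 * (rv s.2.2) ^ 2 - (rπe s.1) ^ 2)
      + pvar P0 rπe := by
  intro Q rπe Vh p ω g
  have hQ : ∀ x a, Q x a = ∑ o, Prw x a o * rv o := fun _ _ => rfl
  have hωb : ∀ x a, πb x a * ω x a = πe x a := by
    intro x a
    show πb x a * (πe x a / πb x a) = πe x a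
    rw [mul_comm]
    exact div_mul_cancel₀ _ (hπb x a).ne'
  have hpexp : ∀ f : X × A × R → ℝ,
      pexp p f = ∑ x, P0 x * ∑ a, πb x a * ∑ o, Prw x a o * f (x, a, o) := by
    intro f
    unfold pexp
    rw [Fintype.sum_prod_type]
    refine Finset.sum_congr rfl fun x _ => ?_
    rw [Fintype.sum_prod_type, Finset.mul_sum]
    refine Finset.sum_congr rfl fun a _ => ?_
    rw [Finset.mul_sum, Finset.mul_sum]
    refine Finset.sum_congr rfl fun o _ => ?_
    show P0 x * πb x a * Prw x a o * f (x, a, o) = P0 x * (πb x a * (Prw x a o * f (x, a, o)))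
    ring
  have hfst : ∀ h : X → ℝ, pexp p (fun s => h s.1) = pexp P0 h := by
    intro h
    rw [hpexp]
    unfold pexp
    refine Finset.sum_congr rfl fun x _ => ?_
    congr 1
    have h1 : ∀ a, πb x a * (∑ o, Prw x a o * h (x, a, o).1) = πb x a * h x := by
      intro a
      congr 1
      calc ∑ o, Prw x a o * h (x, a, o).1 = ∑ o, Prw x a o * h x := rfl
        _ = (∑ o, Prw x a o) * h x := (Finset.sum_mul _ _ _).symm
        _ = h x := by rw [hPrwsum, one_mul]
    calc ∑ a, πb x a * (∑ o, Prw x a o * h (x, a, o).1) = ∑ a, πb x a * h x :=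
          Finset.sum_congr rfl fun a _ => h1 a
      _ = (∑ a, πb x a) * h x := (Finset.sum_mul _ _ _).symm
      _ = h x := by rw [hπbsum, one_mul]
  have hpsum : ∑ s, p s = 1 := by
    calc ∑ s, p s = pexp p (fun _ => 1) := Finset.sum_congr rfl fun s _ => (mul_one _).symm
      _ = pexp P0 (fun _ => 1) := hfst (fun _ => (1:ℝ))
      _ = 1 := by unfold pexp; simp [hP0sum]
  have hEg : pexp p g = pexp P0 rπe := by
    rw [hpexp]
    unfold pexp
    refine Finset.sum_congr rfl fun x _ => ?_
    congr 1
    have hinner : ∀ a, (∑ o, Prw x a o * g (x, a, o))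
        = ω x a * Q x a + (Vh x - ω x a * Qh x a) := by
      intro a
      calc ∑ o, Prw x a o * g (x, a, o)
          = ∑ o, (ω x a * (Prw x a o * rv o) + (Vh x - ω x a * Qh x a) * Prw x a o) :=
            Finset.sum_congr rfl fun o _ => by
              show Prw x a o * (ω x a * (rv o - Qh x a) + Vh x)
                  = ω x a * (Prw x a o * rv o) + (Vh x - ω x a * Qh x a) * Prw x a o
              ring
        _ = ω x a * (∑ o, Prw x a o * rv o) + (Vh x - ω x a * Qh x a) * (∑ o, Prw x a o) := by
            rw [Finset.sum_add_distrib, ← Finset.mul_sum, ← Finset.mul_sum]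
        _ = ω x a * Q x a + (Vh x - ω x a * Qh x a) := by rw [hPrwsum, mul_one, ← hQ]
    calc ∑ a, πb x a * (∑ o, Prw x a o * g (x, a, o))
        = ∑ a, (πe x a * Q x a + Vh x * πb x a - πe x a * Qh x a) := by
          refine Finset.sum_congr rfl fun a _ => ?_
          rw [hinner a]
          calc πb x a * (ω x a * Q x a + (Vh x - ω x a * Qh x a))
              = (πb x a * ω x a) * Q x a + Vh x * πb x a - (πb x a * ω x a) * Qh x a := by ring
            _ = πe x a * Q x a + Vh x * πb x a - πe x a * Qh x a := by rw [hωb]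
      _ = (∑ a, πe x a * Q x a) + Vh x * (∑ a, πb x a) - (∑ a, πe x a * Qh x a) := by
          rw [Finset.sum_sub_distrib, Finset.sum_add_distrib, ← Finset.mul_sum]
      _ = rπe x := by
          rw [hπbsum, mul_one]
          show rπe x + Vh x - Vh x = rπe x
          ring
  have hG2 : pexp p (fun s => g s ^ 2)
      = pexp p (fun s =>
          ω s.1 s.2.1 *
            ((∑ a', πe s.1 a' * (ω s.1 a' * (Qh s.1 a') ^ 2))
              - (Vh s.1) ^ 2
              - 2 * rv s.2.2 * (ω s.1 s.2.1 * Qh s.1 s.2.1 - Vh s.1))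
          + (ω s.1 s.2.1) ^ 2 * (rv s.2.2) ^ 2) := by
    rw [hpexp, hpexp]
    refine Finset.sum_congr rfl fun x _ => ?_
    congr 1
    set S := ∑ a', πe x a' * (ω x a' * Qh x a' ^ 2) with hS
    set D : A → ℝ := fun a =>
      ω x a ^ 2 * Qh x a ^ 2 - 2 * ω x a * Qh x a * Vh x + Vh x ^ 2 - ω x a * S
        + ω x a * Vh x ^ 2 with hD
    rw [← sub_eq_zero, ← Finset.sum_sub_distrib]
    have hterm : ∀ a,
        πb x a * (∑ o, Prw x a o * g (x, a, o) ^ 2)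
          - πb x a * (∑ o, Prw x a o *
              (ω (x, a, o).1 (x, a, o).2.1 *
                ((∑ a', πe (x, a, o).1 a' * (ω (x, a, o).1 a' * (Qh (x, a, o).1 a') ^ 2))
                  - (Vh (x, a, o).1) ^ 2
                  - 2 * rv (x, a, o).2.2 *
                      (ω (x, a, o).1 (x, a, o).2.1 * Qh (x, a, o).1 (x, a, o).2.1
                        - Vh (x, a, o).1))
                + (ω (x, a, o).1 (x, a, o).2.1) ^ 2 * (rv (x, a, o).2.2) ^ 2))
          = πb x a * D a := by
      intro a
      rw [← mul_sub, ← Finset.sum_sub_distrib]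
      congr 1
      have hptwise : ∀ o : R,
          Prw x a o * g (x, a, o) ^ 2
            - Prw x a o *
              (ω x a * (S - Vh x ^ 2 - 2 * rv o * (ω x a * Qh x a - Vh x))
                + ω x a ^ 2 * rv o ^ 2)
          = Prw x a o * D a := by
        intro o
        show Prw x a o * (ω x a * (rv o - Qh x a) + Vh x) ^ 2
            - Prw x a o *
              (ω x a * (S - Vh x ^ 2 - 2 * rv o * (ω x a * Qh x a - Vh x))
                + ω x a ^ 2 * rv o ^ 2)
          = Prw x a o *
              (ω x a ^ 2 * Qh x a ^ 2 - 2 * ω x a * Qh x a * Vh x + Vh x ^ 2 - ω x a * S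
                + ω x a * Vh x ^ 2)
        ring
      calc (∑ o, (Prw x a o * g (x, a, o) ^ 2
              - Prw x a o *
                (ω x a * (S - Vh x ^ 2 - 2 * rv o * (ω x a * Qh x a - Vh x))
                  + ω x a ^ 2 * rv o ^ 2)))
          = ∑ o, Prw x a o * D a := Finset.sum_congr rfl fun o _ => hptwise o
        _ = (∑ o, Prw x a o) * D a := (Finset.sum_mul _ _ _).symm
        _ = D a := by rw [hPrwsum, one_mul]
    calc (∑ a, (πb x a * (∑ o, Prw x a o * g (x, a, o) ^ 2)
            - πb x a * (∑ o, Prw x a o *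
                (ω (x, a, o).1 (x, a, o).2.1 *
                  ((∑ a', πe (x, a, o).1 a' * (ω (x, a, o).1 a' * (Qh (x, a, o).1 a') ^ 2))
                    - (Vh (x, a, o).1) ^ 2
                    - 2 * rv (x, a, o).2.2 *
                        (ω (x, a, o).1 (x, a, o).2.1 * Qh (x, a, o).1 (x, a, o).2.1
                          - Vh (x, a, o).1))
                  + (ω (x, a, o).1 (x, a, o).2.1) ^ 2 * (rv (x, a, o).2.2) ^ 2))))
        = ∑ a, πb x a * D a := Finset.sum_congr rfl fun a _ => hterm a
      _ = ∑ a, (πe x a * (ω x a * Qh x a ^ 2) - 2 * Vh x * (πe x a * Qh x a)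
            + Vh x ^ 2 * πb x a - S * πe x a + Vh x ^ 2 * πe x a) := by
          refine Finset.sum_congr rfl fun a _ => ?_
          calc πb x a * D a
              = (πb x a * ω x a) * (ω x a * Qh x a ^ 2)
                  - 2 * Vh x * ((πb x a * ω x a) * Qh x a)
                  + Vh x ^ 2 * πb x a - S * (πb x a * ω x a)
                  + Vh x ^ 2 * (πb x a * ω x a) := by rw [hD]; ring
            _ = _ := by rw [hωb]
      _ = (∑ a, πe x a * (ω x a * Qh x a ^ 2)) - 2 * Vh x * (∑ a, πe x a * Qh x a)
            + Vh x ^ 2 * (∑ a, πb x a) - S * (∑ a, πe x a) + Vh x ^ 2 * (∑ a, πe x a) := by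
          rw [Finset.sum_add_distrib, Finset.sum_sub_distrib, Finset.sum_add_distrib,
            Finset.sum_sub_distrib, ← Finset.mul_sum, ← Finset.mul_sum, ← Finset.mul_sum,
            ← Finset.mul_sum]
      _ = 0 := by
          rw [hπbsum, hπesum, ← hS]
          show S - 2 * Vh x * Vh x + Vh x ^ 2 * 1 - S * 1 + Vh x ^ 2 * 1 = 0
          ring
  rw [pvar_const_mul, pvar_iid p hpsum g, pvar_eq_sub p g hpsum, pvar_eq_sub P0 rπe hP0sum]
  have hRHS : pexp p (fun s =>
        ω s.1 s.2.1 *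
          ((∑ a', πe s.1 a' * (ω s.1 a' * (Qh s.1 a') ^ 2))
            - (Vh s.1) ^ 2
            - 2 * rv s.2.2 * (ω s.1 s.2.1 * Qh s.1 s.2.1 - Vh s.1))
        + (ω s.1 s.2.1) ^ 2 * (rv s.2.2) ^ 2 - (rπe s.1) ^ 2)
      = pexp p (fun s => g s ^ 2) - pexp P0 (fun x => rπe x ^ 2) := by
    rw [pexp_sub, hG2.symm, hfst (fun x => rπe x ^ 2)]
  rw [hRHS, hEg]
  have hncast : ((n : ℝ)) ≠ 0 := Nat.cast_ne_zero.mpr hn.ne'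
  field_simp
  ring
end
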